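/- Let k be a field with char k ≠ 2. Then so₈(k) is the direct sum of the (+1)-eigenspace g = {v ∈ so₈(k) : s v s = v} and the (−1)-eigenspace V = {v ∈ so₈(k) : s v s = −v} of the involution θ(v) = s v s; the subspace g is a Lie subalgebra of so₈(k) isomorphic as a Lie algebra to the direct product of two copies of so₄(k), and dim_k V = 16. -/

import Mathlib

open Matrix

noncomputable section

variable (k : Type*) [Field k]

/-- The 8×8 matrix `Ψ`, block diagonal with two anti-diagonal 4×4 blocks. -/
def Psi : Matrix (Fin 8) (Fin 8) k :=
  !![0,0,0,1,0,0,0,0;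
     0,0,1,0,0,0,0,0;
     0,1,0,0,0,0,0,0;
     1,0,0,0,0,0,0,0;
     0,0,0,0,0,0,0,1;
     0,0,0,0,0,0,1,0;
     0,0,0,0,0,1,0,0;
     0,0,0,0,1,0,0,0]

/-- The matrix `s = diag(1,−1,−1,1,1,−1,−1,1)`. -/
def sMat : Matrix (Fin 8) (Fin 8) k := Matrix.diagonal ![1,-1,-1,1,1,-1,-1,1]

/-- `so₈(k) = {v : vᵀΨ = −Ψv}`. -/
def so8Set : Set (Matrix (Fin 8) (Fin 8) k) := {v | vᵀ * Psi k = -(Psi k * v)}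

/-- The `(+1)`-eigenspace `g` of `θ(v) = svs` on `so₈(k)`. -/
def gSet : Set (Matrix (Fin 8) (Fin 8) k) :=
  {v | vᵀ * Psi k = -(Psi k * v) ∧ sMat k * v * sMat k = v}

/-- The `(−1)`-eigenspace `V` of `θ(v) = svs` on `so₈(k)`. -/
def VSet : Set (Matrix (Fin 8) (Fin 8) k) :=
  {v | vᵀ * Psi k = -(Psi k * v) ∧ sMat k * v * sMat k = -v}

/-- `V` as a `k`-submodule of the 8×8 matrices. -/
def VSubm : Submodule k (Matrix (Fin 8) (Fin 8) k) where
  carrier := VSet k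
  add_mem' := by
    intro a b ha hb
    obtain ⟨ha1, ha2⟩ := ha
    obtain ⟨hb1, hb2⟩ := hb
    constructor
    · rw [Matrix.transpose_add, Matrix.add_mul, ha1, hb1, Matrix.mul_add, neg_add]
    · rw [Matrix.mul_add, Matrix.add_mul, ha2, hb2, neg_add]
  zero_mem' := by constructor <;> simp
  smul_mem' := by
    intro c a ha
    obtain ⟨ha1, ha2⟩ := ha
    constructor
    · rw [Matrix.transpose_smul, Matrix.smul_mul, ha1, Matrix.mul_smul, smul_neg]
    · rw [Matrix.mul_smul, Matrix.smul_mul, ha2, smul_neg]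

/-- The 4×4 anti-diagonal matrix `J`. -/
def J4 : Matrix (Fin 4) (Fin 4) k :=
  !![0,0,0,1;
     0,0,1,0;
     0,1,0,0;
     1,0,0,0]

/-- `so₄(k) = {x : xᵀJ = −Jx}`. -/
def so4Set : Set (Matrix (Fin 4) (Fin 4) k) := {x | xᵀ * J4 k = -(J4 k * x)}

/-!
Reindexing the basis in the order `0, 4, 7, 3 | 1, 5, 6, 2` turns `s` into the block matrix
`diag(1, -1)` and `Ψ` into `diag(J, J)`. In this block form `θ` negates the two off-diagonal
blocks, so (as `2` is invertible) `g` consists of the block-diagonal matrices with blocks in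
`so₄(k)`, on which the projection to the diagonal blocks is a Lie algebra isomorphism; and an
element of `V` has zero diagonal blocks and is determined by its upper-right block `B`, which is
arbitrary (the lower-left block is `-J Bᵀ J`), so `V ≅ M₄(k)`. The decomposition
`v = (v + θ v)/2 + (v - θ v)/2` holds for any involution preserving `so₈(k)`.
-/

theorem eq_zero_of_neg_eq_self (R : Type*) {M : Type*} [Ring R] [Invertible (2 : R)]
    [AddCommGroup M] [Module R M] {x : M} (h : -x = x) : x = 0 := by
  have h2x : (2 : R) • x = 0 := by rw [two_smul]; nth_rw 1 [← h]; exact neg_add_cancel x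
  rw [← one_smul R x, ← invOf_mul_self (2 : R), mul_smul, h2x, smul_zero]

theorem existsUnique_add_of_involutive {R M : Type*} [Ring R] [Invertible (2 : R)]
    [AddCommGroup M] [Module R M] (θ : M →ₗ[R] M) (hθ : Function.Involutive θ)
    {W : Submodule R M} (hW : ∀ w ∈ W, θ w ∈ W) {w : M} (hw : w ∈ W) :
    ∃! p : M × M, (p.1 ∈ W ∧ θ p.1 = p.1) ∧ (p.2 ∈ W ∧ θ p.2 = -p.2) ∧ w = p.1 + p.2 := by
  refine ⟨((⅟2 : R) • (w + θ w), (⅟2 : R) • (w - θ w)), ⟨⟨?_, ?_⟩, ⟨?_, ?_⟩, ?_⟩, ?_⟩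
  · exact W.smul_mem _ (W.add_mem hw (hW w hw))
  · rw [map_smul, map_add, hθ w, add_comm]
  · exact W.smul_mem _ (W.sub_mem hw (hW w hw))
  · rw [map_smul, map_sub, hθ w, ← smul_neg, neg_sub]
  · rw [← smul_add, add_add_sub_cancel, smul_add, invOf_two_smul_add_invOf_two_smul]
  · rintro ⟨a, b⟩ ⟨⟨-, ha⟩, ⟨-, hb⟩, rfl⟩
    have hθw : θ (a + b) = a - b := by rw [map_add, ha, hb, sub_eq_add_neg]
    rw [hθw, add_add_sub_cancel, show a + b - (a - b) = b + b by abel, smul_add, smul_add,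
      invOf_two_smul_add_invOf_two_smul, invOf_two_smul_add_invOf_two_smul]

theorem mem_skewAdjointMatricesSubmodule_iff {R n : Type*} [CommRing R] [Fintype n]
    [DecidableEq n] {J A : Matrix n n R} :
    A ∈ skewAdjointMatricesSubmodule J ↔ Aᵀ * J = -(J * A) := by
  rw [mem_skewAdjointMatricesSubmodule, Matrix.IsSkewAdjoint, Matrix.IsAdjointPair, mul_neg]

theorem conj_mem_skewAdjointMatricesSubmodule {R n : Type*} [CommRing R] [Fintype n]
    [DecidableEq n] {J S A : Matrix n n R} (hS : Sᵀ = S) (hSJ : S * J = J * S)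
    (hA : A ∈ skewAdjointMatricesSubmodule J) : S * A * S ∈ skewAdjointMatricesSubmodule J := by
  rw [mem_skewAdjointMatricesSubmodule_iff] at hA ⊢
  calc (S * A * S)ᵀ * J = S * (Aᵀ * J) * S := by
        rw [transpose_mul, transpose_mul, hS]; simp only [Matrix.mul_assoc, hSJ]
    _ = -(J * (S * A * S)) := by
        rw [hA, Matrix.mul_neg, Matrix.neg_mul, ← Matrix.mul_assoc S J, hSJ]
        simp only [Matrix.mul_assoc]

theorem involutive_mulLeftRight_self {R A : Type*} [CommSemiring R] [Semiring A] [Algebra R A]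
    {s : A} (hs : s * s = 1) : Function.Involutive (LinearMap.mulLeftRight R (s, s)) := by
  intro x
  simp only [LinearMap.mulLeftRight_apply, ← mul_assoc, hs, one_mul]
  rw [mul_assoc, hs, mul_one]

theorem conj_mul_conj {M : Type*} [Monoid M] {s : M} (hs : s * s = 1) (x y : M) :
    s * x * s * (s * y * s) = s * (x * y) * s := by
  simp only [mul_assoc]
  rw [← mul_assoc s s, hs, one_mul]

section Blocks

variable {R l m : Type*} [Ring R] [Fintype l] [Fintype m]

theorem fromBlocks_conj_fromBlocks_one_neg_one [DecidableEq l] [DecidableEq m] (A : Matrix l l R)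
    (B : Matrix l m R) (C : Matrix m l R) (D : Matrix m m R) :
    fromBlocks 1 0 0 (-1) * fromBlocks A B C D * fromBlocks 1 0 0 (-1) =
      fromBlocks A (-B) (-C) D := by
  simp [fromBlocks_multiply]

theorem fromBlocks_skewAdjoint_iff {J₁ : Matrix l l R} {J₂ : Matrix m m R} {A : Matrix l l R}
    {B : Matrix l m R} {C : Matrix m l R} {D : Matrix m m R} :
    (fromBlocks A B C D)ᵀ * fromBlocks J₁ 0 0 J₂ = -(fromBlocks J₁ 0 0 J₂ * fromBlocks A B C D) ↔
      Aᵀ * J₁ = -(J₁ * A) ∧ Cᵀ * J₂ = -(J₁ * B) ∧ Bᵀ * J₁ = -(J₂ * C) ∧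
        Dᵀ * J₂ = -(J₂ * D) := by
  simp [fromBlocks_transpose, fromBlocks_multiply, fromBlocks_neg, fromBlocks_inj]

end Blocks

theorem fromBlocks_offDiag_skewAdjoint_iff {R m : Type*} [CommRing R] [Fintype m]
    [DecidableEq m] {J : Matrix m m R} (hJ : Jᵀ = J) (hJJ : J * J = 1) {B C : Matrix m m R} :
    (fromBlocks 0 B C 0)ᵀ * fromBlocks J 0 0 J = -(fromBlocks J 0 0 J * fromBlocks 0 B C 0) ↔
      C = -(J * Bᵀ * J) := by
  rw [fromBlocks_skewAdjoint_iff]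
  constructor
  · rintro ⟨-, -, hBC, -⟩
    calc C = -(J * -(J * C)) := by
          rw [mul_neg, neg_neg, ← Matrix.mul_assoc, hJJ, Matrix.one_mul]
      _ = -(J * Bᵀ * J) := by rw [← hBC, Matrix.mul_assoc]
  · rintro rfl
    refine ⟨by simp, ?_, ?_, by simp⟩
    · simp [Matrix.mul_assoc, hJ, hJJ]
    · simp [← Matrix.mul_assoc, hJJ]

def blockIndex : Fin 8 ≃ Fin 4 ⊕ Fin 4 where
  toFun := ![.inl 0, .inr 0, .inr 3, .inl 3, .inl 1, .inr 1, .inr 2, .inl 2]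
  invFun := Sum.elim ![0, 4, 7, 3] ![1, 5, 6, 2]
  left_inv := by decide
  right_inv := by decide

def blockForm : Matrix (Fin 8) (Fin 8) k ≃ₐ[k] Matrix (Fin 4 ⊕ Fin 4) (Fin 4 ⊕ Fin 4) k :=
  reindexAlgEquiv k k blockIndex

theorem blockForm_Psi : blockForm k (Psi k) = fromBlocks (J4 k) 0 0 (J4 k) := by
  ext (i | i) (j | j) <;> fin_cases i <;> fin_cases j <;> rfl

theorem blockForm_sMat : blockForm k (sMat k) = fromBlocks 1 0 0 (-1) := by
  rw [← diagonal_one, diagonal_neg, fromBlocks_diagonal, blockForm, coe_reindexAlgEquiv,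
    reindex_apply, sMat, submatrix_diagonal_equiv]
  congr 1
  ext (i | i) <;> fin_cases i <;> rfl

theorem blockForm_transpose (v : Matrix (Fin 8) (Fin 8) k) : blockForm k vᵀ = (blockForm k v)ᵀ :=
  (transpose_reindex _ _ v).symm

theorem J4_transpose : (J4 k)ᵀ = J4 k := by
  ext i j; fin_cases i <;> fin_cases j <;> rfl

theorem J4_mul_self : J4 k * J4 k = 1 := by
  ext i j; fin_cases i <;> fin_cases j <;> simp [J4, mul_apply, Fin.sum_univ_four]

theorem sMat_transpose : (sMat k)ᵀ = sMat k := diagonal_transpose _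

theorem sMat_mul_self : sMat k * sMat k = 1 := by
  apply (blockForm k).injective
  rw [map_mul, map_one, blockForm_sMat, fromBlocks_multiply]
  simp

theorem sMat_mul_Psi : sMat k * Psi k = Psi k * sMat k := by
  apply (blockForm k).injective
  rw [map_mul, map_mul, blockForm_sMat, blockForm_Psi, fromBlocks_multiply, fromBlocks_multiply]
  simp

variable {k}

theorem transpose_mul_Psi_eq_iff {v : Matrix (Fin 8) (Fin 8) k} :
    vᵀ * Psi k = -(Psi k * v) ↔
      (blockForm k v)ᵀ * fromBlocks (J4 k) 0 0 (J4 k) =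
        -(fromBlocks (J4 k) 0 0 (J4 k) * blockForm k v) := by
  rw [← blockForm_Psi, ← blockForm_transpose, ← map_mul, ← map_mul, ← map_neg,
    (blockForm k).injective.eq_iff]

theorem sMat_conj_eq_iff {v w : Matrix (Fin 8) (Fin 8) k} :
    sMat k * v * sMat k = w ↔
      fromBlocks 1 0 0 (-1) * blockForm k v * fromBlocks 1 0 0 (-1) = blockForm k w := by
  rw [← blockForm_sMat, ← map_mul, ← map_mul, (blockForm k).injective.eq_iff]

theorem mem_gSet_iff [Invertible (2 : k)] {v : Matrix (Fin 8) (Fin 8) k} :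
    v ∈ gSet k ↔ ∃ A D, A ∈ so4Set k ∧ D ∈ so4Set k ∧ blockForm k v = fromBlocks A 0 0 D := by
  obtain ⟨A, B, C, D, hv⟩ : ∃ A B C D, blockForm k v = fromBlocks A B C D :=
    ⟨_, _, _, _, (fromBlocks_toBlocks _).symm⟩
  rw [gSet, Set.mem_ofPred_eq, transpose_mul_Psi_eq_iff, sMat_conj_eq_iff, hv,
    fromBlocks_skewAdjoint_iff, fromBlocks_conj_fromBlocks_one_neg_one, fromBlocks_inj]
  constructor
  · rintro ⟨⟨hA, -, -, hD⟩, -, hB, hC, -⟩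
    exact ⟨A, D, hA, hD, by rw [eq_zero_of_neg_eq_self k hB, eq_zero_of_neg_eq_self k hC]⟩
  · rintro ⟨A', D', hA', hD', h⟩
    obtain ⟨rfl, rfl, rfl, rfl⟩ := fromBlocks_inj.1 h
    exact ⟨⟨hA', by simp, by simp, hD'⟩, by simp⟩

theorem mem_VSet_iff [Invertible (2 : k)] {v : Matrix (Fin 8) (Fin 8) k} :
    v ∈ VSet k ↔ ∃ B, blockForm k v = fromBlocks 0 B (-(J4 k * Bᵀ * J4 k)) 0 := by
  obtain ⟨A, B, C, D, hv⟩ : ∃ A B C D, blockForm k v = fromBlocks A B C D :=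
    ⟨_, _, _, _, (fromBlocks_toBlocks _).symm⟩
  rw [VSet, Set.mem_ofPred_eq, transpose_mul_Psi_eq_iff, sMat_conj_eq_iff, map_neg, hv,
    fromBlocks_conj_fromBlocks_one_neg_one, fromBlocks_neg, fromBlocks_inj]
  constructor
  · rintro ⟨hskew, hA, -, -, hD⟩
    obtain rfl := eq_zero_of_neg_eq_self k hA.symm
    obtain rfl := eq_zero_of_neg_eq_self k hD.symm
    rw [fromBlocks_offDiag_skewAdjoint_iff (J4_transpose k) (J4_mul_self k)] at hskew
    exact ⟨B, by rw [hskew]⟩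
  · rintro ⟨B', h⟩
    obtain ⟨rfl, rfl, rfl, rfl⟩ := fromBlocks_inj.1 h
    refine ⟨(fromBlocks_offDiag_skewAdjoint_iff (J4_transpose k) (J4_mul_self k)).2 rfl, ?_⟩
    simp

theorem commutator_mem_gSet {x y : Matrix (Fin 8) (Fin 8) k} (hx : x ∈ gSet k)
    (hy : y ∈ gSet k) : x * y - y * x ∈ gSet k := by
  obtain ⟨hx, hxs⟩ := hx
  obtain ⟨hy, hys⟩ := hy
  refine ⟨?_, ?_⟩
  · rw [← mem_skewAdjointMatricesSubmodule_iff] at hx hy ⊢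
    rw [← Ring.lie_def]
    exact isSkewAdjoint_bracket _ hx hy
  · rw [Matrix.mul_sub, Matrix.sub_mul, ← conj_mul_conj (sMat_mul_self k),
      ← conj_mul_conj (sMat_mul_self k), hxs, hys]

variable (k) in
def blockDiagonalPart :
    Matrix (Fin 8) (Fin 8) k →ₗ[k] Matrix (Fin 4) (Fin 4) k × Matrix (Fin 4) (Fin 4) k where
  toFun v := ((blockForm k v).toBlocks₁₁, (blockForm k v).toBlocks₂₂)
  map_add' _ _ := rfl
  map_smul' _ _ := rfl

theorem blockDiagonalPart_eq_of_blockForm_eq {v : Matrix (Fin 8) (Fin 8) k}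
    {A B C D : Matrix (Fin 4) (Fin 4) k}
    (hv : blockForm k v = fromBlocks A B C D) : blockDiagonalPart k v = (A, D) := by
  change ((blockForm k v).toBlocks₁₁, (blockForm k v).toBlocks₂₂) = (A, D)
  rw [hv, toBlocks_fromBlocks₁₁, toBlocks_fromBlocks₂₂]

section InvertibleTwo

variable [Invertible (2 : k)]

theorem injOn_blockDiagonalPart_gSet : Set.InjOn (blockDiagonalPart k) (gSet k) := by
  intro x hx y hy hxy
  obtain ⟨A, D, -, -, hx⟩ := mem_gSet_iff.1 hx
  obtain ⟨A', D', -, -, hy⟩ := mem_gSet_iff.1 hy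
  rw [blockDiagonalPart_eq_of_blockForm_eq hx, blockDiagonalPart_eq_of_blockForm_eq hy,
    Prod.mk.injEq] at hxy
  apply (blockForm k).injective
  rw [hx, hy, hxy.1, hxy.2]

theorem image_blockDiagonalPart_gSet :
    blockDiagonalPart k '' gSet k = {p | p.1 ∈ so4Set k ∧ p.2 ∈ so4Set k} := by
  ext ⟨A, D⟩
  constructor
  · rintro ⟨v, hv, hvAD⟩
    obtain ⟨A', D', hA', hD', hv⟩ := mem_gSet_iff.1 hv
    rw [blockDiagonalPart_eq_of_blockForm_eq hv] at hvAD
    simp_all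
  · rintro ⟨hA, hD⟩
    refine ⟨(blockForm k).symm (fromBlocks A 0 0 D), mem_gSet_iff.2 ⟨A, D, hA, hD, by simp⟩, ?_⟩
    exact blockDiagonalPart_eq_of_blockForm_eq ((blockForm k).apply_symm_apply _)

theorem blockDiagonalPart_commutator {x y : Matrix (Fin 8) (Fin 8) k} (hx : x ∈ gSet k)
    (hy : y ∈ gSet k) :
    blockDiagonalPart k (x * y - y * x) =
      ((blockDiagonalPart k x).1 * (blockDiagonalPart k y).1 -
          (blockDiagonalPart k y).1 * (blockDiagonalPart k x).1,
        (blockDiagonalPart k x).2 * (blockDiagonalPart k y).2 -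
          (blockDiagonalPart k y).2 * (blockDiagonalPart k x).2) := by
  obtain ⟨A, D, -, -, hx⟩ := mem_gSet_iff.1 hx
  obtain ⟨A', D', -, -, hy⟩ := mem_gSet_iff.1 hy
  rw [blockDiagonalPart_eq_of_blockForm_eq hx, blockDiagonalPart_eq_of_blockForm_eq hy]
  apply blockDiagonalPart_eq_of_blockForm_eq (B := 0) (C := 0)
  rw [map_sub, map_mul, map_mul, hx, hy, fromBlocks_multiply, fromBlocks_multiply]
  simp [sub_eq_add_neg, fromBlocks_neg, fromBlocks_add]

variable (k) in
def VSubm.equivMatrix : VSubm k ≃ₗ[k] Matrix (Fin 4) (Fin 4) k where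
  toFun v := (blockForm k v).toBlocks₁₂
  map_add' _ _ := rfl
  map_smul' _ _ := rfl
  invFun B := ⟨(blockForm k).symm (fromBlocks 0 B (-(J4 k * Bᵀ * J4 k)) 0),
    mem_VSet_iff.2 ⟨B, by simp⟩⟩
  left_inv v := by
    obtain ⟨B, hB⟩ := mem_VSet_iff.1 v.2
    ext1
    apply (blockForm k).injective
    simp [hB]
  right_inv B := by simp

theorem finrank_VSubm : Module.finrank k (VSubm k) = 16 := by
  rw [(VSubm.equivMatrix k).finrank_eq, Module.finrank_matrix]
  simp

end InvertibleTwo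

/-- `so₈(k) = g ⊕ V` as eigenspaces of `θ(v) = svs`; `g` is a Lie subalgebra
isomorphic as a Lie algebra to `so₄(k) × so₄(k)`, and `dim_k V = 16`. -/
theorem stmt2 (k : Type*) [Field k] (h2 : ringChar k ≠ 2) :
    (∀ v ∈ so8Set k, ∃! p : Matrix (Fin 8) (Fin 8) k × Matrix (Fin 8) (Fin 8) k,
        p.1 ∈ gSet k ∧ p.2 ∈ VSet k ∧ v = p.1 + p.2)
    ∧ (∀ x ∈ gSet k, ∀ y ∈ gSet k, x * y - y * x ∈ gSet k)
    ∧ (∃ φ : Matrix (Fin 8) (Fin 8) k →ₗ[k]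
          Matrix (Fin 4) (Fin 4) k × Matrix (Fin 4) (Fin 4) k,
        Set.InjOn φ (gSet k)
        ∧ φ '' gSet k = {p | p.1 ∈ so4Set k ∧ p.2 ∈ so4Set k}
        ∧ ∀ x ∈ gSet k, ∀ y ∈ gSet k,
            φ (x * y - y * x)
              = ((φ x).1 * (φ y).1 - (φ y).1 * (φ x).1,
                 (φ x).2 * (φ y).2 - (φ y).2 * (φ x).2))
    ∧ Module.finrank k (VSubm k) = 16 := by
  have : Invertible (2 : k) := invertibleOfNonzero (Ring.two_ne_zero h2)
  refine ⟨fun v hv => ?_, fun x hx y hy => commutator_mem_gSet hx hy,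
    ⟨blockDiagonalPart k, injOn_blockDiagonalPart_gSet, image_blockDiagonalPart_gSet,
      fun x hx y hy => blockDiagonalPart_commutator hx hy⟩, finrank_VSubm⟩
  have hθ := existsUnique_add_of_involutive (LinearMap.mulLeftRight k (sMat k, sMat k))
    (involutive_mulLeftRight_self (sMat_mul_self k))
    (fun w hw => conj_mem_skewAdjointMatricesSubmodule (sMat_transpose k) (sMat_mul_Psi k) hw)
    (mem_skewAdjointMatricesSubmodule_iff.2 hv)
  simp only [LinearMap.mulLeftRight_apply, mem_skewAdjointMatricesSubmodule_iff] at hθ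
  exact hθ

end
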